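/- arXiv:1806.03562 — 4 statements merged into one kernel-verified Lean document; each statement's English description precedes it below -/
import Mathlib

section
/- Let N be a positive even natural number and p ≥ 1 a natural number. Let ε : Fin N → ℤ be any sign vector (each ε i ∈ {−1, 1}) with ∑_{i} ε i = 0. Then the signed sum ∑_{q} ∏_{i} (ε i)^{q i}, taken over all weak compositions q of 2p into N parts, equals C(p + N/2 − 1, p). -/
/-!
The signed sum is the coefficient of `X ^ (2p)` in `∏ i, (1 - ε i X)⁻¹`. Balanced signs make
this product `((1 - X) (1 + X))⁻¹ ^ m = (1 - X²)⁻¹ ^ m` with `m = N / 2`, whose coefficient of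
`X ^ (2p)` is the coefficient of `X ^ p` in `(1 - X)⁻¹ ^ m`, namely `C(p + m - 1, p)`.
-/

open Finset PowerSeries

namespace PowerSeries

variable {R : Type*}

theorem mk_pow_mul_one_sub_C_mul_X [CommRing R] (a : R) : mk (a ^ ·) * (1 - C a * X) = 1 := by
  simpa [rescale_mk, rescale_X] using congrArg (rescale a) (mk_one_mul_one_sub_eq_one R)

theorem coeff_invOneSubPow [CommRing R] (d n : ℕ) :
    coeff n (invOneSubPow R d : R⟦X⟧) = (n + d - 1).choose n := by
  rcases d with _ | d
  · rcases n with _ | n <;> simp [invOneSubPow_zero, coeff_one]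
  · rw [invOneSubPow_val_succ_eq_mk_add_choose, coeff_mk, Nat.add_succ_sub_one, add_comm n,
      Nat.choose_symm_add]

theorem coeff_prod_mk_pow [CommSemiring R] {ι : Type*} [DecidableEq ι] (s : Finset ι) (a : ι → R)
    (n : ℕ) :
    coeff n (∏ i ∈ s, mk (a i ^ ·)) = ∑ q ∈ s.piAntidiag n, ∏ i ∈ s, a i ^ q i := by
  simp only [coeff_prod, coeff_mk, finsuppAntidiag, sum_map]
  exact sum_attach (s.piAntidiag n) fun q => ∏ i ∈ s, a i ^ q i

end PowerSeries

section Signs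

variable {ι : Type*} [Fintype ι] {ε : ι → ℤ}

theorem filter_not_eq_one_eq_filter_eq_neg_one (hε : ∀ i, ε i = 1 ∨ ε i = -1) :
    univ.filter (fun i => ¬ε i = 1) = univ.filter (ε · = -1) :=
  filter_congr fun i _ => by rcases hε i with h | h <;> simp [h]

@[to_additive]
theorem prod_comp_of_sign {M : Type*} [CommMonoid M] (f : ℤ → M)
    (hε : ∀ i, ε i = 1 ∨ ε i = -1) :
    ∏ i, f (ε i) = f 1 ^ #{i | ε i = 1} * f (-1) ^ #{i | ε i = -1} := by
  rw [← prod_filter_mul_prod_filter_not univ (ε · = 1), filter_not_eq_one_eq_filter_eq_neg_one hε,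
    ← prod_const, ← prod_const]
  congr 1 <;> exact prod_congr rfl fun i hi => by rw [(mem_filter.1 hi).2]

theorem card_filter_eq_one_add_card_filter_eq_neg_one (hε : ∀ i, ε i = 1 ∨ ε i = -1) :
    #{i | ε i = 1} + #{i | ε i = -1} = Fintype.card ι := by
  rw [← filter_not_eq_one_eq_filter_eq_neg_one hε, card_filter_add_card_filter_not, card_univ]

theorem card_filter_eq_neg_one_of_sum_eq_zero (hε : ∀ i, ε i = 1 ∨ ε i = -1)
    (hsum : ∑ i, ε i = 0) : #{i | ε i = -1} = #{i | ε i = 1} := by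
  have := sum_comp_of_sign id hε
  simp only [id, hsum, nsmul_eq_mul, mul_one, mul_neg] at this
  omega

theorem prod_one_sub_C_mul_X_of_sum_eq_zero (hε : ∀ i, ε i = 1 ∨ ε i = -1)
    (hsum : ∑ i, ε i = 0) :
    ∏ i, (1 - C (ε i) * X) = expand 2 two_ne_zero ((1 - X : ℤ⟦X⟧) ^ #{i | ε i = 1}) := by
  rw [prod_comp_of_sign (fun a => 1 - C a * X) hε, card_filter_eq_neg_one_of_sum_eq_zero hε hsum,
    ← mul_pow, map_pow, map_sub, map_one, expand_X]
  congr 1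
  simp only [map_one, map_neg, one_mul, neg_mul, sub_neg_eq_add]
  ring

end Signs

theorem signed_sum_of_monomials_balanced_general
    (N p : ℕ)
    (ε : Fin N → ℤ) (hε : ∀ i, ε i = 1 ∨ ε i = -1)
    (hsum : ∑ i, ε i = 0) :
    ∑ q ∈ Finset.Nat.antidiagonalTuple N (2 * p), ∏ i, ε i ^ q i
      = ((p + N / 2 - 1).choose p : ℤ) := by
  set m := #{i | ε i = 1}
  have hm : N / 2 = m := by
    have := card_filter_eq_one_add_card_filter_eq_neg_one hε
    rw [card_filter_eq_neg_one_of_sum_eq_zero hε hsum, Fintype.card_fin] at this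
    omega
  have hinv : ∏ i, mk (ε i ^ ·) = expand 2 two_ne_zero (invOneSubPow ℤ m : ℤ⟦X⟧) := by
    refine left_inv_eq_right_inv (a := expand 2 two_ne_zero ((1 - X : ℤ⟦X⟧) ^ m)) ?_ ?_
    · rw [← prod_one_sub_C_mul_X_of_sum_eq_zero hε hsum, ← prod_mul_distrib]
      exact prod_eq_one fun i _ => mk_pow_mul_one_sub_C_mul_X (ε i)
    · rw [← map_mul, ← invOneSubPow_inv_eq_one_sub_pow, Units.inv_val, map_one]
  rw [← piAntidiag_univ_fin_eq_antidiagonalTuple, ← coeff_prod_mk_pow, hinv, coeff_expand_mul,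
    coeff_invOneSubPow, hm]

/-- **Balanced case of Lemma 2.1 (Corollary 2.3).**
For a sign vector `ε : Fin N → ℤ` on an even positive `N` with `∑ i, ε i = 0`,
the signed sum `∑_q ∏ i, (ε i)^(q i)` over all weak compositions `q` of `2p`
into `N` parts equals `C(p + N/2 - 1, p)`. -/
theorem signed_sum_of_monomials_balanced
    (N p : ℕ) (hN : 0 < N) (hNeven : N % 2 = 0) (hp : 1 ≤ p)
    (ε : Fin N → ℤ) (hε : ∀ i, ε i = 1 ∨ ε i = -1)
    (hsum : ∑ i, ε i = 0) :
    ∑ q ∈ Finset.Nat.antidiagonalTuple N (2 * p), ∏ i, ε i ^ q i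
      = ((p + N / 2 - 1).choose p : ℤ) :=
  signed_sum_of_monomials_balanced_general N p ε hε hsum
end

section
/- Let N, M, p be natural numbers with p ≥ 1, 0 ≤ M ≤ N and N ≡ M (mod 2). Then the double sum ∑_{ε} ∑_{q} ∏_{i} (ε i)^{q i}, where ε ranges over all sign vectors in Fin N → ℤ with ∑_i ε i = M and q ranges over all weak compositions of 2p into N parts, equals C(N, (N+M)/2) · ∑_{m=0}^{p} C(p − m + (N−M)/2 − 1, p − m) · C(2m + M − 1, 2m). -/
/-!
For a sign vector `ε`, the inner sum over weak compositions of `2p` is the coefficient of `X^(2p)`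
in `∏ i, 1 / (1 - ε i X)`. If `ε` has `k = (N - M) / 2` entries `-1`, this product is
`(1 + X)^(-k) (1 - X)^(-(N - k)) = (1 - X²)^(-k) (1 - X)^(-M)` (with `1 / (1 - X) = mk 1`,
`1 / (1 + X) = rescale (-1) (mk 1)`, `1 / (1 - X²) = expand 2 _ (mk 1)`), the same for every such
`ε`, and there are `C(N, k)` of them. The coefficient of `X^(2p)` in `(1 - X²)^(-k) (1 - X)^(-M)`
is the sum over `m` of the theorem.
-/

open Finset PowerSeries

namespace PowerSeries

theorem sum_antidiagonalTuple_prod_eq_coeff_prod_mk {R : Type*} [CommSemiring R] (N d : ℕ)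
    (f : Fin N → ℕ → R) :
    ∑ q ∈ Nat.antidiagonalTuple N d, ∏ i, f i (q i) = coeff d (∏ i, mk (f i)) := by
  rw [coeff_prod]
  refine sum_nbij' Finsupp.equivFunOnFinite.symm (⇑) ?_ ?_ (fun _ _ ↦ rfl) (fun _ _ ↦ by simp)
    (fun _ _ ↦ by simp)
  · intro q hq
    simpa [mem_finsuppAntidiag, Nat.mem_antidiagonalTuple] using hq
  · intro l hl
    simpa [Nat.mem_antidiagonalTuple] using (mem_finsuppAntidiag.mp hl).1

variable {R : Type*} [CommRing R]

-- For `k = 0` truncated subtraction makes the right side `1` at `n = 0` and `0` otherwise.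
theorem coeff_mk_one_pow (k n : ℕ) :
    coeff n ((mk 1 : R⟦X⟧) ^ k) = (n + k - 1).choose n := by
  rcases k with _ | k
  · rcases n with _ | n
    · simp
    · simp [coeff_one]
  · rw [mk_one_pow_eq_mk_choose_add, coeff_mk, ← add_assoc, Nat.add_sub_cancel,
      Nat.choose_symm_add, add_comm]

theorem rescale_neg_one_mk_one_mul_mk_one :
    rescale (-1 : R) (mk 1) * mk 1 = expand 2 two_ne_zero (mk 1) := by
  have hG : (mk 1 : R⟦X⟧) * (1 - X) = 1 := mk_one_mul_one_sub_eq_one R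
  have hH : rescale (-1 : R) (mk 1) * (1 + X) = 1 := by
    simpa [rescale_neg_one_X] using congrArg (rescale (-1 : R)) hG
  have hE : expand 2 two_ne_zero (mk 1 : R⟦X⟧) * (1 - X ^ 2) = 1 := by
    simpa [expand_X] using congrArg (expand 2 two_ne_zero) hG
  calc rescale (-1 : R) (mk 1) * mk 1
      = rescale (-1 : R) (mk 1) * mk 1 * (expand 2 two_ne_zero (mk 1) * (1 - X ^ 2)) := by
        rw [hE, mul_one]
    _ = (rescale (-1 : R) (mk 1) * (1 + X)) * (mk 1 * (1 - X)) * expand 2 two_ne_zero (mk 1) := by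
        ring
    _ = expand 2 two_ne_zero (mk 1) := by rw [hH, hG, one_mul, one_mul]

theorem coeff_expand_mul_eq_sum (q : ℕ) (hq : q ≠ 0) (φ ψ : R⟦X⟧) (n : ℕ) :
    coeff n (expand q hq φ * ψ) = ∑ i ∈ range (n / q + 1), coeff i φ * coeff (n - q * i) ψ := by
  have hdiv : ∀ i, i ≤ n / q ↔ q * i ≤ n := fun i ↦ by
    rw [Nat.le_div_iff_mul_le (Nat.pos_of_ne_zero hq), mul_comm]
  have hsub : (range (n / q + 1)).map ⟨(q * ·), mul_right_injective₀ hq⟩ ⊆ range (n + 1) := by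
    simp only [subset_iff, mem_map, mem_range, Function.Embedding.coeFn_mk]
    rintro _ ⟨i, hi, rfl⟩
    have := (hdiv i).mp (by omega)
    omega
  rw [coeff_mul, Nat.sum_antidiagonal_eq_sum_range_succ_mk, ← sum_subset hsub, sum_map]
  · simp [coeff_expand_mul]
  · rintro j hj hjq
    rw [coeff_expand_of_not_dvd, zero_mul]
    rintro ⟨i, rfl⟩
    refine hjq (mem_map.mpr ⟨i, ?_, rfl⟩)
    have := (hdiv i).mpr (by simpa using mem_range.mp hj)
    exact mem_range.mpr (by omega)

end PowerSeries

section SignVector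

variable {ι : Type*} [Fintype ι] [DecidableEq ι]

def signVector (T : Finset ι) (i : ι) : ℤ := if i ∈ T then -1 else 1

theorem signVector_mem_piFinset (T : Finset ι) :
    signVector T ∈ Fintype.piFinset fun _ ↦ ({-1, 1} : Finset ℤ) := by
  simp only [Fintype.mem_piFinset, signVector]
  intro i
  split_ifs <;> simp

theorem sum_signVector (T : Finset ι) :
    ∑ i, signVector T i = (Fintype.card ι : ℤ) - 2 * #T := by
  simp only [signVector, sum_ite, ← compl_filter, filter_mem_eq_inter, univ_inter, sum_const,
    smul_neg, nsmul_eq_mul, mul_one, ← card_add_card_compl T]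
  push_cast
  ring

theorem signVector_filter_eq_neg_one {ε : ι → ℤ}
    (hε : ε ∈ Fintype.piFinset fun _ ↦ ({-1, 1} : Finset ℤ)) :
    signVector {i | ε i = -1} = ε := by
  funext i
  have := Fintype.mem_piFinset.mp hε i
  simp only [mem_insert, mem_singleton] at this
  rcases this with h | h <;> simp [signVector, h]

theorem filter_signVector_eq_neg_one (T : Finset ι) :
    ({i | signVector T i = -1} : Finset ι) = T := by
  ext i
  by_cases h : i ∈ T <;> simp [signVector, h]

theorem sum_signVectors_eq_sum_powersetCard {β : Type*} [AddCommMonoid β] {M k : ℕ}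
    (hcard : Fintype.card ι = M + 2 * k) (f : (ι → ℤ) → β) :
    ∑ ε ∈ (Fintype.piFinset fun _ ↦ ({-1, 1} : Finset ℤ)).filter (fun ε ↦ ∑ i, ε i = (M : ℤ)), f ε
      = ∑ T ∈ powersetCard k univ, f (signVector T) := by
  refine sum_nbij' (fun ε ↦ ({i | ε i = -1} : Finset ι)) signVector ?_ ?_ ?_ ?_ ?_
  · intro ε hε
    rw [mem_filter] at hε
    have hsum := sum_signVector (ι := ι) {i | ε i = -1}
    rw [signVector_filter_eq_neg_one hε.1, hε.2, hcard] at hsum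
    simp only [mem_powersetCard_univ]
    omega
  · intro T hT
    simp only [mem_powersetCard_univ] at hT
    simp only [mem_filter, signVector_mem_piFinset, sum_signVector, hcard, hT, true_and]
    push_cast; ring
  · intro ε hε
    exact signVector_filter_eq_neg_one (mem_filter.mp hε).1
  · intro T _
    exact filter_signVector_eq_neg_one T
  · intro ε hε
    rw [signVector_filter_eq_neg_one (mem_filter.mp hε).1]

theorem prod_mk_signVector_pow (T : Finset ι) :
    ∏ i, mk (fun n ↦ signVector T i ^ n)
      = rescale (-1 : ℤ) (mk 1) ^ #T * (mk 1 : ℤ⟦X⟧) ^ #Tᶜ := by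
  have hmk : ∀ i, mk (fun n ↦ signVector T i ^ n)
      = if i ∈ T then rescale (-1) (mk 1) else mk 1 := by
    intro i
    unfold signVector
    split_ifs
    · simp [rescale_mk]
    · simp only [one_pow]; rfl
  simp only [hmk, prod_ite, prod_const, filter_mem_eq_inter, univ_inter, ← sdiff_eq_filter,
    ← compl_eq_univ_sdiff]

end SignVector

theorem double_sum_of_monomials_eq_general
    (N M p : ℕ) (hMN : M ≤ N) (hmod : N % 2 = M % 2) :
    ∑ ε ∈ (Fintype.piFinset fun _ : Fin N => ({-1, 1} : Finset ℤ)).filter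
        (fun ε => ∑ i, ε i = (M : ℤ)),
      ∑ q ∈ Finset.Nat.antidiagonalTuple N (2 * p), ∏ i, ε i ^ q i
      = (N.choose ((N + M) / 2) : ℤ) *
          ∑ m ∈ Finset.range (p + 1),
            ((p - m + (N - M) / 2 - 1).choose (p - m)
              * (2 * m + M - 1).choose (2 * m) : ℤ) := by
  obtain ⟨k, hN⟩ : ∃ k, N = M + 2 * k := ⟨(N - M) / 2, by omega⟩
  have hk : (N - M) / 2 = k := by omega
  have hchoose : N.choose ((N + M) / 2) = N.choose k := by
    rw [show (N + M) / 2 = N - k by omega, Nat.choose_symm (by omega)]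
  have hinner : ∀ T ∈ powersetCard k (univ : Finset (Fin N)),
      ∑ q ∈ Nat.antidiagonalTuple N (2 * p), ∏ i, signVector T i ^ q i
        = coeff (2 * p) (expand 2 two_ne_zero ((mk 1 : ℤ⟦X⟧) ^ k) * (mk 1 : ℤ⟦X⟧) ^ M) := by
    intro T hT
    have hTc : #Tᶜ = k + M := by
      rw [card_compl, Fintype.card_fin, mem_powersetCard_univ.mp hT]; omega
    rw [sum_antidiagonalTuple_prod_eq_coeff_prod_mk, prod_mk_signVector_pow, hTc,
      mem_powersetCard_univ.mp hT, map_pow, ← rescale_neg_one_mk_one_mul_mk_one, mul_pow,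
      pow_add, mul_assoc]
  rw [sum_signVectors_eq_sum_powersetCard (by simpa using hN), sum_congr rfl hinner, sum_const,
    card_powersetCard, card_univ, Fintype.card_fin, nsmul_eq_mul, hk, hchoose,
    coeff_expand_mul_eq_sum, Nat.mul_div_cancel_left _ two_pos, ← sum_range_reflect]
  congr 1
  refine sum_congr rfl fun m hm ↦ ?_
  have hmp : m ≤ p := Nat.lt_succ_iff.mp (mem_range.mp hm)
  rw [coeff_mk_one_pow, coeff_mk_one_pow, Nat.add_sub_cancel,
    show 2 * p - 2 * (p - m) = 2 * m by omega]

/-- **Lemma 2.4 (unnormalized form).**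
The double sum `∑_ε ∑_q ∏ i, (ε i)^(q i)`, where `ε` ranges over all sign
vectors in `Fin N → ℤ` with `∑ i, ε i = M` and `q` ranges over all weak
compositions of `2p` into `N` parts, equals
`C(N, (N+M)/2) * ∑_{m=0}^{p} C(p - m + (N-M)/2 - 1, p - m) * C(2m + M - 1, 2m)`. -/
theorem double_sum_of_monomials_eq
    (N M p : ℕ) (hp : 1 ≤ p) (hMN : M ≤ N) (hmod : N % 2 = M % 2) :
    ∑ ε ∈ (Fintype.piFinset fun _ : Fin N => ({-1, 1} : Finset ℤ)).filter
        (fun ε => ∑ i, ε i = (M : ℤ)),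
      ∑ q ∈ Finset.Nat.antidiagonalTuple N (2 * p), ∏ i, ε i ^ q i
      = (N.choose ((N + M) / 2) : ℤ) *
          ∑ m ∈ Finset.range (p + 1),
            ((p - m + (N - M) / 2 - 1).choose (p - m)
              * (2 * m + M - 1).choose (2 * m) : ℤ) :=
  double_sum_of_monomials_eq_general N M p hMN hmod
end

section
/- (Corollary 4.3.) Fix a natural number p ≥ 2 and take M = 1. For odd natural numbers N, define K(N, 1, p) = (2^N · N^p / (C(N, (N+1)/2) · C(2p + N − 1, 2p))) · ∑_{m=0}^{p} C(p − m + (N−1)/2 − 1, p − m) · C(2m, 2m). Then K(N, 1, p) / (e^{−p/N} · √(π N / 2) · (2p)! / (2^p · p!)) → 1 as N → ∞ along the odd natural numbers. -/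
/-!
For odd `N = 2n + 1` the hockey-stick identity collapses the sum to `C(n + p, p)`, so that
`K(N, 1, p) = 2 · 4ⁿ (2n + 1)ᵖ C(n + p, p) / (C(2n + 1, n + 1) C(2n + 2p, 2p))`.
Stirling's formula gives `C(2n + 1, n + 1) ~ 2 · 4ⁿ / √(πn)`, and `C(an + c, k) ~ (an)ᵏ / k!`
for fixed `k`; hence `K(N, 1, p) ~ √(πn) (2p)! / (2ᵖ p!)`, which is also the behaviour of
`e^{-p/N} √(πN/2) (2p)! / (2ᵖ p!)`.
-/

open Real Filter Asymptotics Topology Finset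

theorem Asymptotics.IsEquivalent.sqrt {α : Type*} {u v : α → ℝ} {l : Filter α}
    (hv : 0 ≤ v) (h : u ~[l] v) : (fun x ↦ √(u x)) ~[l] fun x ↦ √(v x) := by
  convert h.rpow hv (r := 1 / 2) using 1 <;> funext x <;> exact Real.sqrt_eq_rpow _

lemma isEquivalent_mul_add_const {a : ℝ} (ha : 0 < a) (c : ℝ) :
    (fun n : ℕ ↦ a * n + c) ~[atTop] fun n ↦ a * n :=
  IsEquivalent.refl.add_const_of_norm_tendsto_atTop <|
    tendsto_norm_atTop_atTop.comp <| tendsto_natCast_atTop_atTop.const_mul_atTop' ha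

lemma isEquivalent_choose_mul_add (k : ℕ) {a : ℕ} (ha : 0 < a) (c : ℕ) :
    (fun n : ℕ ↦ ((a * n + c).choose k : ℝ)) ~[atTop] fun n ↦ (a * n) ^ k / k.factorial := by
  have hlin : Tendsto (fun n : ℕ ↦ a * n + c) atTop atTop :=
    tendsto_atTop_mono (fun n ↦ Nat.le_add_right _ c) (tendsto_id.const_mul_atTop' ha)
  refine ((isEquivalent_choose k).comp_tendsto hlin).trans ?_
  exact (((isEquivalent_mul_add_const (Nat.cast_pos.mpr ha) c).pow k).div
    (IsEquivalent.refl (u := fun _ ↦ (k.factorial : ℝ)))).congr_left (.of_forall fun n ↦ by simp)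

lemma isEquivalent_centralBinom :
    (fun n : ℕ ↦ (n.centralBinom : ℝ)) ~[atTop] fun n ↦ 4 ^ n / √(π * n) := by
  have h2n : Tendsto (fun n : ℕ ↦ 2 * n) atTop atTop :=
    tendsto_id.const_mul_atTop' two_pos
  have hS := Stirling.factorial_isEquivalent_stirling
  refine (((hS.comp_tendsto h2n).div (hS.pow 2)).congr_left ?_).trans_eventuallyEq ?_
  · refine Eventually.of_forall fun n ↦ ?_
    simp only [Function.comp_apply, Pi.div_apply, Pi.pow_apply]
    rw [Nat.centralBinom_eq_two_mul_choose, Nat.cast_choose ℝ (by omega),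
      show 2 * n - n = n by omega, sq]
  · filter_upwards [eventually_ge_atTop 1] with n hn
    have hn₀ : (0 : ℝ) < n := by exact_mod_cast hn
    have hs : √(π * n) ^ 2 = π * n := Real.sq_sqrt (by positivity)
    have h4 : √(2 * ((2 * n : ℕ) : ℝ) * π) = 2 * √(π * n) := by
      rw [show (2 : ℝ) * ((2 * n : ℕ) : ℝ) * π = 2 ^ 2 * (π * n) by push_cast; ring,
        Real.sqrt_mul (by norm_num) (π * n), Real.sqrt_sq (by norm_num)]
    have h2 : √(2 * n * π) ^ 2 = 2 * (π * n) := by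
      rw [Real.sq_sqrt (by positivity)]; ring
    have hpow : (((2 * n : ℕ) : ℝ) / exp 1) ^ (2 * n) = 4 ^ n * ((n / exp 1) ^ n) ^ 2 := by
      rw [← pow_mul, show ((2 * n : ℕ) : ℝ) / exp 1 = 2 * (n / exp 1) by push_cast; ring,
        mul_pow, pow_mul, mul_comm n 2, pow_mul]
      norm_num
    simp only [Function.comp_apply, Pi.div_apply, Pi.pow_apply]
    rw [mul_pow, h4, h2, hpow]
    field_simp
    rw [hs]

lemma sum_range_choose_sub_add (p k : ℕ) :
    ∑ m ∈ range (p + 1), (p - m + k).choose (p - m) = (p + k + 1).choose p := by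
  have h := sum_range_reflect (fun j ↦ (j + k).choose k) (p + 1)
  simp only [Nat.add_sub_cancel] at h
  calc ∑ m ∈ range (p + 1), (p - m + k).choose (p - m)
      = ∑ m ∈ range (p + 1), (p - m + k).choose k := sum_congr rfl fun m _ ↦ Nat.choose_symm_add
    _ = (p + (k + 1)).choose (k + 1) := by rw [h, Nat.sum_range_add_choose, add_assoc]
    _ = (p + k + 1).choose p := by rw [← Nat.choose_symm_add, add_assoc]

/-- The constant `K(N, 1, p)`. -/
noncomputable def bestConstant (p N : ℕ) : ℝ :=
  ((2 : ℝ) ^ N * (N : ℝ) ^ p /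
      ((N.choose ((N + 1) / 2) : ℝ) * ((2 * p + N - 1).choose (2 * p) : ℝ))) *
    ∑ m ∈ Finset.range (p + 1),
      ((p - m + (N - 1) / 2 - 1).choose (p - m) : ℝ) * ((2 * m).choose (2 * m) : ℝ)

lemma bestConstant_two_mul_add_one (p : ℕ) {n : ℕ} (hn : 1 ≤ n) :
    bestConstant p (2 * n + 1) =
      2 * 4 ^ n * (2 * n + 1) ^ p * ((n + p).choose p : ℝ) /
        ((2 * n + 1).choose (n + 1) * (2 * n + 2 * p).choose (2 * p)) := by
  obtain ⟨k, rfl⟩ : ∃ k, n = k + 1 := ⟨n - 1, by omega⟩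
  have hsum : ∑ m ∈ range (p + 1),
      ((p - m + (2 * (k + 1) + 1 - 1) / 2 - 1).choose (p - m) : ℝ) * ((2 * m).choose (2 * m) : ℝ)
        = ((k + 1 + p).choose p : ℝ) := by
    simp only [Nat.choose_self, Nat.cast_one, mul_one]
    rw [← Nat.cast_sum]
    congr 1
    rw [show k + 1 + p = p + k + 1 by omega, ← sum_range_choose_sub_add]
    refine sum_congr rfl fun m _ ↦ ?_
    congr 1; omega
  rw [bestConstant, hsum, show (2 * (k + 1) + 1 + 1) / 2 = k + 1 + 1 by omega,
    show 2 * p + (2 * (k + 1) + 1) - 1 = 2 * (k + 1) + 2 * p by omega, pow_succ, pow_mul]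
  push_cast
  ring

lemma isEquivalent_choose_two_mul_add_one :
    (fun n : ℕ ↦ ((2 * n + 1).choose (n + 1) : ℝ)) ~[atTop] fun n ↦ 2 * 4 ^ n / √(π * n) := by
  have h := ((isEquivalent_mul_add_const two_pos 1).div
    (isEquivalent_mul_add_const one_pos 1)).mul isEquivalent_centralBinom
  refine (h.congr_left (.of_forall fun n ↦ ?_)).trans_eventuallyEq ?_
  · simp only [Pi.mul_apply, Pi.div_apply, one_mul]
    rw [Nat.centralBinom_eq_two_mul_choose, div_mul_eq_mul_div, div_eq_iff (by positivity)]
    exact_mod_cast Nat.add_one_mul_choose_eq (2 * n) n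
  · filter_upwards [eventually_gt_atTop 0] with n hn
    have hn₀ : (n : ℝ) ≠ 0 := by positivity
    simp only [Pi.mul_apply, Pi.div_apply]
    field_simp

lemma isEquivalent_bestConstant_two_mul_add_one (p : ℕ) :
    (fun n : ℕ ↦ bestConstant p (2 * n + 1)) ~[atTop]
      fun n ↦ √(π * n) * (2 * p).factorial / (2 ^ p * p.factorial) := by
  have h := (((IsEquivalent.refl (u := fun n : ℕ ↦ (2 * 4 ^ n : ℝ))).mul
    ((isEquivalent_mul_add_const two_pos 1).pow p)).mul
      (isEquivalent_choose_mul_add p one_pos p)).div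
    (isEquivalent_choose_two_mul_add_one.mul (isEquivalent_choose_mul_add (2 * p) two_pos (2 * p)))
  refine (h.congr_left ?_).trans_eventuallyEq ?_
  · filter_upwards [eventually_ge_atTop 1] with n hn
    rw [bestConstant_two_mul_add_one p hn]
    simp
  · filter_upwards [eventually_gt_atTop 0] with n hn
    have hn₀ : (n : ℝ) ≠ 0 := by positivity
    simp only [Pi.mul_apply, Pi.div_apply, Pi.pow_apply]
    push_cast
    field_simp
    ring

lemma isEquivalent_exp_mul_sqrt (c : ℝ) :
    (fun n : ℕ ↦ exp (-c / (2 * n + 1)) * √(π * (2 * n + 1) / 2)) ~[atTop] fun n ↦ √(π * n) := by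
  have hexp : (fun n : ℕ ↦ exp (-c / (2 * n + 1))) ~[atTop] fun _ ↦ 1 := by
    refine (isEquivalent_const_iff_tendsto one_ne_zero).mpr ?_
    have hlin : Tendsto (fun n : ℕ ↦ 2 * (n : ℝ) + 1) atTop atTop :=
      tendsto_atTop_add_const_right _ 1 (tendsto_natCast_atTop_atTop.const_mul_atTop two_pos)
    simpa only [exp_zero, Function.comp_def] using
      (continuous_exp.tendsto 0).comp ((tendsto_const_nhds (x := -c)).div_atTop hlin)
  have hsqrt := (isEquivalent_mul_add_const pi_pos (π / 2)).sqrt fun n ↦ by positivity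
  refine (hexp.mul hsqrt).congr_left (.of_forall fun n ↦ ?_) |>.congr_right (.of_forall fun n ↦ ?_)
  · simp only [Pi.mul_apply]
    ring_nf
  · simp

lemma map_two_mul_add_one_atTop :
    map (fun n ↦ 2 * n + 1) atTop = atTop ⊓ 𝓟 {N : ℕ | N % 2 = 1} := by
  refine le_antisymm (le_inf ?_ ?_) fun U hU ↦ ?_
  · exact tendsto_atTop_mono (fun n ↦ show n ≤ 2 * n + 1 by omega) tendsto_id
  · exact le_principal_iff.mpr (mem_map.mpr (univ_mem' fun n ↦ show (2 * n + 1) % 2 = 1 by omega))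
  · obtain ⟨a, ha⟩ := mem_atTop_sets.mp (mem_map.mp hU)
    refine mem_inf_principal.mpr (mem_atTop_sets.mpr ⟨2 * a + 1, fun N hN hodd ↦ ?_⟩)
    rw [show N = 2 * (N / 2) + 1 by simp at hodd; omega]
    exact ha (N / 2) (by omega)

theorem asymptotics_M_eq_one_general (p : ℕ) :
    Tendsto
      (fun N : ℕ =>
        (((2 : ℝ) ^ N * (N : ℝ) ^ p /
              ((N.choose ((N + 1) / 2) : ℝ) * ((2 * p + N - 1).choose (2 * p) : ℝ))) *
            ∑ m ∈ Finset.range (p + 1),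
              ((p - m + (N - 1) / 2 - 1).choose (p - m) : ℝ) *
                ((2 * m).choose (2 * m) : ℝ))
          /
        (Real.exp (-(p : ℝ) / (N : ℝ)) * Real.sqrt (π * (N : ℝ) / 2) *
            ((2 * p).factorial : ℝ) / (2 ^ p * (p.factorial : ℝ))))
      (atTop ⊓ Filter.principal {N : ℕ | N % 2 = 1})
      (nhds 1) := by
  rw [← map_two_mul_add_one_atTop, tendsto_map'_iff]
  have hD := ((isEquivalent_exp_mul_sqrt p).mul
    (IsEquivalent.refl (u := fun _ ↦ ((2 * p).factorial : ℝ)))).div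
      (IsEquivalent.refl (u := fun _ ↦ (2 ^ p * p.factorial : ℝ)))
  have hD0 : ∀ᶠ n : ℕ in atTop,
      exp (-p / (2 * n + 1)) * √(π * (2 * n + 1) / 2) * (2 * p).factorial / (2 ^ p * p.factorial)
        ≠ 0 :=
    .of_forall fun n ↦ by positivity
  refine ((isEquivalent_iff_tendsto_one hD0).mp
    ((isEquivalent_bestConstant_two_mul_add_one p).trans hD.symm)).congr fun n ↦ ?_
  simp only [Function.comp_apply, Pi.div_apply, bestConstant]
  push_cast
  rfl

/-- **Corollary 4.3 (asymptotics for `M = 1`).**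
For fixed `p ≥ 2`, the best constant
`K(N, 1, p) = (2^N N^p / (C(N,(N+1)/2) C(2p+N-1,2p))) *
  ∑_{m=0}^{p} C(p-m+(N-1)/2-1, p-m) C(2m, 2m)`
satisfies `K(N, 1, p) / (e^{-p/N} √(πN/2) (2p)!/(2^p p!)) → 1` as `N → ∞`
along odd naturals. -/
theorem asymptotics_M_eq_one (p : ℕ) (hp : 2 ≤ p) :
    Tendsto
      (fun N : ℕ =>
        (((2 : ℝ) ^ N * (N : ℝ) ^ p /
              ((N.choose ((N + 1) / 2) : ℝ) * ((2 * p + N - 1).choose (2 * p) : ℝ))) *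
            ∑ m ∈ Finset.range (p + 1),
              ((p - m + (N - 1) / 2 - 1).choose (p - m) : ℝ) *
                ((2 * m).choose (2 * m) : ℝ))
          /
        (Real.exp (-(p : ℝ) / (N : ℝ)) * Real.sqrt (π * (N : ℝ) / 2) *
            ((2 * p).factorial : ℝ) / (2 ^ p * (p.factorial : ℝ))))
      (atTop ⊓ Filter.principal {N : ℕ | N % 2 = 1})
      (nhds 1) :=
  asymptotics_M_eq_one_general p
end

section
/- (Theorem 5.1: asymptotics of a proportionally growing sample.) Fix a natural number p ≥ 2 and a real number α > 1, and let (n_k) be a strictly increasing sequence of positive natural numbers such that α · n_k is a natural number for every k. For such n, set N = (α+1)·n and M = (α−1)·n (both natural numbers), and let K(n) = (2^N · N^p / (C(N, (N+M)/2) · C(2p + N − 1, 2p))) · ∑_{m=0}^{p} C(p − m + n − 1, p − m) · C(2m + M − 1, 2m). Define G(n) = √(2π n α / (α+1)) · α^{α n} · 2^{(α+1) n} / (α+1)^{(α+1) n} · (2p)! / (α+1)^p · ∑_{m=0}^{p} (α−1)^{2m} · n^m / ((p−m)! · (2m)!). Then K(n_k) / G(n_k) → 1 as k → ∞. -/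
/-!
By Stirling's formula, `C((α+1)n, αn) ~ (α+1)^((α+1)n) α^(-αn) / √(2πnα/(α+1))`. For fixed `t`,
`C(t+u-1, t) = u(u+1)⋯(u+t-1)/t!` is a polynomial in `u` with leading term `u^t/t!`; applied
termwise, the `m`-th summand of the sum in `K` is asymptotic to `n^p` times the `m`-th summand of
the sum in `G`, and since the latter are nonnegative the two sums are asymptotic as well.
Multiplying these equivalences gives `K(n) ~ G(n)`.
-/

open Real Filter Asymptotics Nat Topology

section

variable {ι : Type*} {l : Filter ι}

theorem isEquivalent_choose_add_sub_one (t : ℕ) {u : ι → ℕ} (hu : Tendsto u l atTop) :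
    (fun k => ((t + u k - 1).choose t : ℝ)) ~[l] fun k => (u k : ℝ) ^ t / t ! := by
  have hpoch (x : ℕ) : ((t + x - 1).choose t : ℝ) = (ascPochhammer ℝ t).eval (x : ℝ) / t ! := by
    rw [ascPochhammer_nat_eq_natCast_ascFactorial, Nat.ascFactorial_eq_factorial_mul_choose',
      add_comm x]
    push_cast
    field_simp
  have hlead := (ascPochhammer ℝ t).isEquivalent_atTop_lead
  rw [(monic_ascPochhammer ℝ t).leadingCoeff, ascPochhammer_natDegree] at hlead
  simp only [hpoch, one_mul] at hlead ⊢
  exact (hlead.comp_tendsto (tendsto_natCast_atTop_atTop.comp hu)).div IsEquivalent.refl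

theorem Asymptotics.IsEquivalent.finsetSum_of_nonneg {κ : Type*} {s : Finset κ}
    {f g : κ → ι → ℝ} (hg : ∀ i ∈ s, 0 ≤ g i) (h : ∀ i ∈ s, f i ~[l] g i) :
    (fun k => ∑ i ∈ s, f i k) ~[l] fun k => ∑ i ∈ s, g i k := by
  classical
  induction s using Finset.induction_on with
  | empty => simpa using IsEquivalent.refl
  | insert i s hi ih =>
    simp only [Finset.sum_insert hi]
    refine IsEquivalent.add_add_of_nonneg (hg i (by simp)) (fun k => ?_) (h i (by simp))
      (ih (fun j hj => hg j (by simp [hj])) (fun j hj => h j (by simp [hj])))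
    exact Finset.sum_nonneg fun j hj => hg j (by simp [hj]) k

theorem stirling_add_div_stirling_mul_stirling {q a : ℕ} (hq : q ≠ 0) (ha : a ≠ 0) :
    √(2 * (q + a : ℕ) * π) * ((q + a : ℕ) / exp 1) ^ (q + a) /
        (√(2 * q * π) * (q / exp 1) ^ q * (√(2 * a * π) * (a / exp 1) ^ a)) =
      ((q : ℝ) + a) ^ (q + a) / ((q : ℝ) ^ q * (a : ℝ) ^ a) / √(2 * π * q * a / (q + a)) := by
  have hq' : (0 : ℝ) < q := by positivity
  have ha' : (0 : ℝ) < a := by positivity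
  push_cast
  rw [div_pow, div_pow, div_pow, pow_add (exp 1)]
  field_simp
  rw [← sqrt_mul (by positivity), ← sqrt_mul (by positivity)]
  congr 1
  field_simp

theorem choose_add_isEquivalent_stirling {q a : ι → ℕ} (hq : Tendsto q l atTop)
    (ha : Tendsto a l atTop) :
    (fun k => ((q k + a k).choose (q k) : ℝ)) ~[l] fun k =>
      ((q k : ℝ) + a k) ^ (q k + a k) / ((q k : ℝ) ^ q k * (a k : ℝ) ^ a k) /
        √(2 * π * q k * a k / (q k + a k)) := by
  have hqa : Tendsto (fun k => q k + a k) l atTop :=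
    tendsto_atTop_mono (fun k => Nat.le_add_right _ _) hq
  have hS := Stirling.factorial_isEquivalent_stirling
  simp only [Nat.cast_add_choose]
  refine ((hS.comp_tendsto hqa).div ((hS.comp_tendsto hq).mul (hS.comp_tendsto ha))).congr_right ?_
  filter_upwards [hq.eventually_ne_atTop 0, ha.eventually_ne_atTop 0] with k hqk hak
  exact stirling_add_div_stirling_mul_stirling hqk hak

theorem choose_add_isEquivalent_of_proportional {α : ℝ} (hα : 0 < α) {q a : ι → ℕ}
    (ha : Tendsto a l atTop) (hq : ∀ k, (q k : ℝ) = α * a k) :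
    (fun k => ((q k + a k).choose (q k) : ℝ)) ~[l] fun k =>
      (α + 1) ^ (q k + a k) / α ^ q k / √(2 * π * a k * α / (α + 1)) := by
  have hq_tendsto : Tendsto q l atTop := by
    rw [← tendsto_natCast_atTop_iff (R := ℝ)]
    simpa only [hq] using (tendsto_natCast_atTop_iff.2 ha).const_mul_atTop hα
  refine (choose_add_isEquivalent_stirling hq_tendsto ha).congr_right ?_
  filter_upwards [ha.eventually_ne_atTop 0] with k hk
  have hk' : (0 : ℝ) < a k := by positivity
  have hsqrt : 2 * π * (α * a k) * a k / (α * a k + a k) = 2 * π * a k * α / (α + 1) := by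
    field_simp
  rw [hq k, hsqrt, show α * a k + a k = (α + 1) * a k by ring, mul_pow, mul_pow, pow_add (a k : ℝ)]
  field_simp

theorem sum_choose_mul_choose_isEquivalent (p : ℕ) {β : ℝ} (hβ : 0 < β) {n M : ι → ℕ}
    (hn : Tendsto n l atTop) (hM : ∀ k, (M k : ℝ) = β * n k) :
    (fun k => ∑ m ∈ Finset.range (p + 1),
        ((p - m + n k - 1).choose (p - m) : ℝ) * ((2 * m + M k - 1).choose (2 * m) : ℝ)) ~[l]
      fun k => (n k : ℝ) ^ p *
        ∑ m ∈ Finset.range (p + 1), β ^ (2 * m) * (n k : ℝ) ^ m / ((p - m)! * (2 * m)! : ℝ) := by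
  have hM_tendsto : Tendsto M l atTop := by
    rw [← tendsto_natCast_atTop_iff (R := ℝ)]
    simpa only [hM] using (tendsto_natCast_atTop_iff.2 hn).const_mul_atTop hβ
  simp only [Finset.mul_sum]
  refine IsEquivalent.finsetSum_of_nonneg (fun m _ k => by positivity) fun m hm => ?_
  obtain ⟨r, rfl⟩ := Nat.exists_eq_add_of_le (Nat.lt_succ_iff.1 (Finset.mem_range.1 hm))
  refine ((isEquivalent_choose_add_sub_one _ hn).mul
    (isEquivalent_choose_add_sub_one _ hM_tendsto)).congr_right (Eventually.of_forall fun k => ?_)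
  simp only [Nat.add_sub_cancel_left, Pi.mul_apply, hM, mul_pow]
  field_simp
  ring

end

theorem asymptotics_proportional_general (p : ℕ) (α : ℝ) (hα : 1 < α)
    (n : ℕ → ℕ) (hmono : StrictMono n)
    (Nn Mn : ℕ → ℕ)
    (hN : ∀ k, (Nn k : ℝ) = (α + 1) * (n k : ℝ))
    (hM : ∀ k, (Mn k : ℝ) = (α - 1) * (n k : ℝ)) :
    Tendsto
      (fun k : ℕ =>
        (((2 : ℝ) ^ (Nn k) * ((Nn k : ℕ) : ℝ) ^ p /
              (((Nn k).choose ((Nn k + Mn k) / 2) : ℝ) *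
                ((2 * p + Nn k - 1).choose (2 * p) : ℝ))) *
            ∑ m ∈ Finset.range (p + 1),
              ((p - m + n k - 1).choose (p - m) : ℝ) *
                ((2 * m + Mn k - 1).choose (2 * m) : ℝ))
          /
        (Real.sqrt (2 * π * (n k : ℝ) * α / (α + 1)) *
            (α ^ (α * (n k : ℝ)) * (2 : ℝ) ^ ((α + 1) * (n k : ℝ)) /
              (α + 1) ^ ((α + 1) * (n k : ℝ))) *
            ((2 * p).factorial : ℝ) / (α + 1) ^ p *
            ∑ m ∈ Finset.range (p + 1),
              (α - 1) ^ (2 * m) * (n k : ℝ) ^ m /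
                (((p - m).factorial : ℝ) * ((2 * m).factorial : ℝ))))
      atTop (nhds 1) := by
  set q : ℕ → ℕ := fun k => Mn k + n k
  have hq (k : ℕ) : (q k : ℝ) = α * n k := by push_cast [q, hM]; ring
  have hNq (k : ℕ) : Nn k = q k + n k := by
    have : (Nn k : ℝ) = q k + n k := by rw [hN, hq]; ring
    exact_mod_cast this
  have hn : Tendsto n atTop atTop := hmono.tendsto_atTop
  have hNn : Tendsto Nn atTop atTop := tendsto_atTop_mono (fun k => by rw [hNq]; omega) hn
  have hbinom : (fun k => ((Nn k).choose ((Nn k + Mn k) / 2) : ℝ)) ~[atTop] fun k =>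
      (α + 1) ^ Nn k / α ^ q k / √(2 * π * n k * α / (α + 1)) := by
    have hhalf (k : ℕ) : (Nn k + Mn k) / 2 = q k := by simp only [hNq, q]; omega
    simp_rw [hhalf, hNq]
    exact choose_add_isEquivalent_of_proportional (by linarith) hn hq
  have hK := ((IsEquivalent.refl (u := fun k => (2 : ℝ) ^ Nn k * (Nn k : ℝ) ^ p)).div
    (hbinom.mul (isEquivalent_choose_add_sub_one (2 * p) hNn))).mul
    (sum_choose_mul_choose_isEquivalent p (by linarith : 0 < α - 1) hn hM)
  refine (isEquivalent_iff_tendsto_one ?_).1 (hK.congr_right ?_)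
  · filter_upwards [hn.eventually_gt_atTop 0] with k hk
    have : 0 < α - 1 := by linarith
    positivity
  · filter_upwards [hn.eventually_gt_atTop 0] with k hk
    have hk' : (0 : ℝ) < n k := by positivity
    have hα' : 0 < α := by linarith
    rw [← hq k, ← hN k, rpow_natCast, rpow_natCast, rpow_natCast]
    simp only [Pi.mul_apply, Pi.div_apply]
    rw [hN k]
    field_simp
    rw [two_mul, pow_add, mul_pow _ _ p]
    ring

/-- **Theorem 5.1 (asymptotics of a proportionally growing sample).**
With `n_k` negative and `α·n_k` positive Rademacher variables (so that
`N_k = (α+1)n_k` and `M_k = (α-1)n_k` are natural numbers), the best constant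
`K(n_k) = (2^{N_k} N_k^p / (C(N_k,(N_k+M_k)/2) C(2p+N_k-1,2p))) *
  ∑_{m=0}^{p} C(p-m+n_k-1, p-m) C(2m+M_k-1, 2m)`
satisfies `K(n_k) / G(n_k) → 1` as `k → ∞`, where
`G(n) = √(2πnα/(α+1)) · α^{αn} 2^{(α+1)n} / (α+1)^{(α+1)n} · (2p)!/(α+1)^p ·
  ∑_{m=0}^{p} (α-1)^{2m} n^m / ((p-m)!(2m)!)`. -/
theorem asymptotics_proportional (p : ℕ) (hp : 2 ≤ p) (α : ℝ) (hα : 1 < α)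
    (n : ℕ → ℕ) (hmono : StrictMono n) (hpos : ∀ k, 0 < n k)
    (Nn Mn : ℕ → ℕ)
    (hN : ∀ k, (Nn k : ℝ) = (α + 1) * (n k : ℝ))
    (hM : ∀ k, (Mn k : ℝ) = (α - 1) * (n k : ℝ)) :
    Tendsto
      (fun k : ℕ =>
        (((2 : ℝ) ^ (Nn k) * ((Nn k : ℕ) : ℝ) ^ p /
              (((Nn k).choose ((Nn k + Mn k) / 2) : ℝ) *
                ((2 * p + Nn k - 1).choose (2 * p) : ℝ))) *
            ∑ m ∈ Finset.range (p + 1),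
              ((p - m + n k - 1).choose (p - m) : ℝ) *
                ((2 * m + Mn k - 1).choose (2 * m) : ℝ))
          /
        (Real.sqrt (2 * π * (n k : ℝ) * α / (α + 1)) *
            (α ^ (α * (n k : ℝ)) * (2 : ℝ) ^ ((α + 1) * (n k : ℝ)) /
              (α + 1) ^ ((α + 1) * (n k : ℝ))) *
            ((2 * p).factorial : ℝ) / (α + 1) ^ p *
            ∑ m ∈ Finset.range (p + 1),
              (α - 1) ^ (2 * m) * (n k : ℝ) ^ m /
                (((p - m).factorial : ℝ) * ((2 * m).factorial : ℝ))))
      atTop (nhds 1) :=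
  asymptotics_proportional_general p α hα n hmono Nn Mn hN hM
end
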